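/- Let j be a positive half-integer, d = 2j+1, and let ρ = Σ_{i,j'=1}^d ρ_{ij'}|ii⟩⟨j'j'| be a Schmidt-correlated density matrix on ℂ^d⊗ℂ^d (computational basis equal to the j_z eigenbasis) with Schmidt number s(ρ) ≤ r. Then Σ_{w∈{x,y,z}} [ Var_{ρ_a}(j_w) + Var_{ρ_b}(j_w) − 2·| ⟨j_w⊗j_w⟩_ρ − ⟨j_w⊗𝟙⟩_ρ⟨𝟙⊗j_w⟩_ρ | ] ≥ B_{j,r}, where ρ_a, ρ_b are the reduced states and Var_σ(A) = ⟨A²⟩_σ − ⟨A⟩_σ². -/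

import Mathlib

open Matrix Kronecker BigOperators Finset
open scoped ComplexOrder

/-- Expectation value ⟨A⟩_ρ = Re tr(ρ A). -/
noncomputable def expval {n : Type*} [Fintype n] (ρ A : Matrix n n ℂ) : ℝ :=
  ((ρ * A).trace).re

/-- A density matrix: positive semidefinite with unit trace. -/
def IsDensityMatrix {n : Type*} [Fintype n] (ρ : Matrix n n ℂ) : Prop :=
  ρ.PosSemidef ∧ ρ.trace = 1

/-- The projector |v⟩⟨v| associated to a vector. -/
noncomputable def pureState {n : Type*} (v : n → ℂ) : Matrix n n ℂ :=
  Matrix.vecMulVec v (star v)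

/-- A normalized vector. -/
def IsUnitVec {n : Type*} [Fintype n] (v : n → ℂ) : Prop :=
  ∑ i, Complex.normSq (v i) = 1

/-- The canonical Hermitian operator basis of ℂ^d, indexed by pairs (j,k):
diagonal operators for j = k, real operators for j < k, imaginary operators for j > k. -/
noncomputable def canonG (d : ℕ) : Fin d × Fin d → Matrix (Fin d) (Fin d) ℂ := fun μ =>
  if μ.1 = μ.2 then Matrix.single μ.1 μ.1 1
  else if μ.1 < μ.2 then
    ((Real.sqrt 2 : ℂ))⁻¹ • (Matrix.single μ.1 μ.2 1 + Matrix.single μ.2 μ.1 1)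
  else
    (Complex.I * ((Real.sqrt 2 : ℂ))⁻¹) •
      (Matrix.single μ.2 μ.1 1 - Matrix.single μ.1 μ.2 1)

/-- Covariance matrix of a family of observables w.r.t. a state ρ. -/
noncomputable def covMat {n K : Type*} [Fintype n] (ρ : Matrix n n ℂ)
    (M : K → Matrix n n ℂ) : Matrix K K ℝ :=
  Matrix.of fun j k =>
    (1/2 : ℝ) * expval ρ (M j * M k + M k * M j) - expval ρ (M j) * expval ρ (M k)

/-- The local observables (g_μ ⊗ 1, 1 ⊗ g_ν) on the bipartite space. -/
noncomputable def bipObs (d : ℕ) :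
    (Fin d × Fin d) ⊕ (Fin d × Fin d) → Matrix (Fin d × Fin d) (Fin d × Fin d) ℂ :=
  Sum.elim (fun μ => canonG d μ ⊗ₖ (1 : Matrix (Fin d) (Fin d) ℂ))
           (fun ν => (1 : Matrix (Fin d) (Fin d) ℂ) ⊗ₖ canonG d ν)

/-- The full covariance matrix Γ_ρ of the canonical bipartite observables. -/
noncomputable def GammaCM (d : ℕ) (ρ : Matrix (Fin d × Fin d) (Fin d × Fin d) ℂ) :
    Matrix ((Fin d × Fin d) ⊕ (Fin d × Fin d)) ((Fin d × Fin d) ⊕ (Fin d × Fin d)) ℝ :=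
  covMat ρ (bipObs d)

/-- The cross-covariance block X_ρ. -/
noncomputable def crossCov (d : ℕ) (ρ : Matrix (Fin d × Fin d) (Fin d × Fin d) ℂ) :
    Matrix (Fin d × Fin d) (Fin d × Fin d) ℝ :=
  Matrix.of fun μ ν =>
    expval ρ (canonG d μ ⊗ₖ canonG d ν)
      - expval ρ (canonG d μ ⊗ₖ 1) * expval ρ ((1 : Matrix (Fin d) (Fin d) ℂ) ⊗ₖ canonG d ν)

/-- Reduced state on the first subsystem. -/
noncomputable def redA (d : ℕ) (ρ : Matrix (Fin d × Fin d) (Fin d × Fin d) ℂ) :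
    Matrix (Fin d) (Fin d) ℂ :=
  Matrix.of fun i j => ∑ k, ρ (i, k) (j, k)

/-- Reduced state on the second subsystem. -/
noncomputable def redB (d : ℕ) (ρ : Matrix (Fin d × Fin d) (Fin d × Fin d) ℂ) :
    Matrix (Fin d) (Fin d) ℂ :=
  Matrix.of fun i j => ∑ k, ρ (k, i) (k, j)

/-- Purity tr(σ²) (real part). -/
noncomputable def purity {n : Type*} [Fintype n] (σ : Matrix n n ℂ) : ℝ :=
  ((σ * σ).trace).re

/-- Trace norm of a real matrix: sum of its singular values, i.e. tr √(XᵀX). -/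
noncomputable def traceNorm {n : Type*} [Fintype n] [DecidableEq n] (X : Matrix n n ℝ) : ℝ :=
  ((Matrix.posSemidef_conjTranspose_mul_self X).1.eigenvectorUnitary.1 *
    Matrix.diagonal ((RCLike.ofReal : ℝ → ℝ) ∘ (Real.sqrt ∘ (Matrix.posSemidef_conjTranspose_mul_self X).1.eigenvalues)) *
    (star (Matrix.posSemidef_conjTranspose_mul_self X).1.eigenvectorUnitary : Matrix n n ℝ)).trace

/-- Schmidt rank of a pure state vector is the rank of its coefficient matrix. -/
def SchmidtRankLE (d r : ℕ) (v : Fin d × Fin d → ℂ) : Prop :=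
  (Matrix.of fun j k : Fin d => v (j, k)).rank ≤ r

/-- Schmidt number at most r. -/
def SchmidtNumberLE (d r : ℕ) (ρ : Matrix (Fin d × Fin d) (Fin d × Fin d) ℂ) : Prop :=
  ∃ (n : ℕ) (p : Fin n → ℝ) (ψ : Fin n → (Fin d × Fin d → ℂ)),
    (∀ k, 0 ≤ p k) ∧ (∑ k, p k = 1) ∧ (∀ k, IsUnitVec (ψ k)) ∧
    (∀ k, SchmidtRankLE d r (ψ k)) ∧
    ρ = ∑ k, (p k : ℂ) • pureState (ψ k)

/-- Variance of an observable in a state. -/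
noncomputable def varState {n : Type*} [Fintype n] (σ A : Matrix n n ℂ) : ℝ :=
  expval σ (A * A) - (expval σ A)^2

/-- The magnetic quantum number m_k = k - j - 1 (0-indexed: k - (d-1)/2). -/
noncomputable def spinM (d : ℕ) (k : Fin d) : ℝ := (k : ℝ) - ((d : ℝ) - 1) / 2

/-- The raising operator j₊ for spin j = (d-1)/2. -/
noncomputable def spinPlus (d : ℕ) : Matrix (Fin d) (Fin d) ℂ :=
  Matrix.of fun a b => if (a : ℕ) = (b : ℕ) + 1 then
    (Real.sqrt (((d : ℝ) - 1) / 2 * (((d : ℝ) - 1) / 2 + 1) - spinM d b * (spinM d b + 1)) : ℂ)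
  else 0

/-- The spin operator j_x = (j₊ + j₋)/2. -/
noncomputable def spinX (d : ℕ) : Matrix (Fin d) (Fin d) ℂ :=
  (1 / 2 : ℂ) • (spinPlus d + (spinPlus d)ᴴ)

/-- The spin operator j_y = (j₊ - j₋)/(2i). -/
noncomputable def spinY (d : ℕ) : Matrix (Fin d) (Fin d) ℂ :=
  (-Complex.I / 2) • (spinPlus d - (spinPlus d)ᴴ)

/-- The spin operator j_z. -/
noncomputable def spinZ (d : ℕ) : Matrix (Fin d) (Fin d) ℂ :=
  Matrix.diagonal fun k => (spinM d k : ℂ)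

/-- The quantity Σ_{k=1}^{d-1} k(d-k)(√λ_k - √λ_{k+1})² (0-indexed λ). -/
noncomputable def spinVarSum (d : ℕ) (lam : Fin d → ℝ) : ℝ :=
  ∑ k ∈ Finset.range (d - 1),
    ((k : ℝ) + 1) * ((d : ℝ) - ((k : ℝ) + 1)) *
      (Real.sqrt (if h : k < d then lam ⟨k, h⟩ else 0) -
       Real.sqrt (if h : k + 1 < d then lam ⟨k + 1, h⟩ else 0)) ^ 2

/-- The bound B_{j,r}: infimum of Σ_k k(d-k)(√λ_k - √λ_{k+1})² over probability
vectors λ ∈ ℝ^d with at most r nonzero entries, where d = 2j+1. -/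
noncomputable def Bspin (d r : ℕ) : ℝ :=
  sInf { v : ℝ | ∃ lam : Fin d → ℝ, (∀ k, 0 ≤ lam k) ∧ (∑ k, lam k = 1) ∧
    (Finset.univ.filter fun k => lam k ≠ 0).card ≤ r ∧ v = spinVarSum d lam }

/-!
For a Schmidt-correlated state both marginals are `diag (c a a)`. The `z`-terms vanish, since
the `j_z ⊗ j_z` covariance of `ρ` equals the variance of `j_z` in the marginal. With
`w a b = |⟨a|j_x|b⟩|² = |⟨a|j_y|b⟩|²`, the four `x`/`y` variances all equal `∑ w a b · Re c a a` and
the `x` and `y` covariances are `±∑ w a b · Re c a b`, so the right-hand side is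
`4 (∑ w a b · Re c a a - |∑ w a b · Re c a b|)`.

A decomposition of `ρ` into pure states of Schmidt rank `≤ r` can only use states
`∑ a, u a |aa⟩` with at most `r` nonzero `u a`, hence `c a b = ∑ m, p m · u m a · conj (u m b)`.
Bounding `|c a b| ≤ ∑ m, p m · |u m a| |u m b|` turns the right-hand side into at least
`∑ m, p m · 2 ∑ w a b (|u m a| - |u m b|)²`, and the inner sum is `spinVarSum` of the probability
vector `|u m ·|²`, which is at least `Bspin d r`.
-/

open ComplexConjugate

section SpinMatrices

variable {d : ℕ}

noncomputable def spinLadder (d : ℕ) : Matrix (Fin d) (Fin d) ℝ :=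
  Matrix.of fun a b => if (a : ℕ) = b + 1 then √(((b : ℝ) + 1) * (d - ((b : ℝ) + 1))) else 0

theorem spinPlus_apply (a b : Fin d) : spinPlus d a b = spinLadder d a b := by
  have hrad : ((d : ℝ) - 1) / 2 * (((d : ℝ) - 1) / 2 + 1) - spinM d b * (spinM d b + 1)
      = ((b : ℝ) + 1) * (d - ((b : ℝ) + 1)) := by
    unfold spinM; ring
  simp only [spinPlus, spinLadder, Matrix.of_apply, hrad]
  split_ifs <;> simp

theorem spinLadder_mul_swap (a b : Fin d) : spinLadder d a b * spinLadder d b a = 0 := by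
  simp only [spinLadder, Matrix.of_apply]
  split_ifs <;> first | omega | simp

theorem spinLadder_sq (a b : Fin d) :
    spinLadder d a b ^ 2 = if (a : ℕ) = b + 1 then ((b : ℝ) + 1) * (d - ((b : ℝ) + 1)) else 0 := by
  have hb : (b : ℝ) + 1 ≤ d := by exact_mod_cast b.isLt
  simp only [spinLadder, Matrix.of_apply]
  split_ifs
  · exact Real.sq_sqrt (by nlinarith)
  · simp

theorem spinX_apply (a b : Fin d) :
    spinX d a b = (((spinLadder d a b + spinLadder d b a) / 2 : ℝ) : ℂ) := by
  simp only [spinX, Matrix.smul_apply, Matrix.add_apply, Matrix.conjTranspose_apply,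
    spinPlus_apply, Complex.star_def, Complex.conj_ofReal, smul_eq_mul]
  push_cast; ring

theorem spinY_apply (a b : Fin d) :
    spinY d a b = -Complex.I / 2 * ((spinLadder d a b - spinLadder d b a : ℝ) : ℂ) := by
  simp only [spinY, Matrix.smul_apply, Matrix.sub_apply, Matrix.conjTranspose_apply,
    spinPlus_apply, Complex.star_def, Complex.conj_ofReal, smul_eq_mul]
  push_cast; ring

theorem spinX_apply_self (a : Fin d) : spinX d a a = 0 := by
  simp [spinX_apply, spinLadder]

theorem spinY_apply_self (a : Fin d) : spinY d a a = 0 := by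
  simp [spinY_apply]

noncomputable def spinWeight (d : ℕ) (a b : Fin d) : ℝ :=
  ((spinLadder d a b + spinLadder d b a) / 2) ^ 2

theorem spinWeight_nonneg (a b : Fin d) : 0 ≤ spinWeight d a b := sq_nonneg _

theorem spinWeight_comm (a b : Fin d) : spinWeight d a b = spinWeight d b a := by
  rw [spinWeight, spinWeight, add_comm]

theorem spinX_mul_spinX_swap (a b : Fin d) : spinX d a b * spinX d b a = spinWeight d a b := by
  rw [spinX_apply, spinX_apply, spinWeight]; push_cast; ring

theorem spinX_mul_self (a b : Fin d) : spinX d a b * spinX d a b = spinWeight d a b := by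
  rw [spinX_apply, spinWeight]; push_cast; ring

theorem spinY_mul_spinY_swap (a b : Fin d) : spinY d a b * spinY d b a = spinWeight d a b := by
  have h : (spinLadder d a b : ℂ) * spinLadder d b a = 0 := by
    exact_mod_cast spinLadder_mul_swap a b
  rw [spinY_apply, spinY_apply, spinWeight]; push_cast
  linear_combination (-(spinLadder d a b - spinLadder d b a : ℂ) ^ 2 / 4) * Complex.I_sq - h

theorem spinY_mul_self (a b : Fin d) : spinY d a b * spinY d a b = -spinWeight d a b := by
  have h : (spinLadder d a b : ℂ) * spinLadder d b a = 0 := by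
    exact_mod_cast spinLadder_mul_swap a b
  rw [spinY_apply, spinWeight]; push_cast
  linear_combination ((spinLadder d a b - spinLadder d b a : ℂ) ^ 2 / 4) * Complex.I_sq + h

end SpinMatrices

section SpinVarSum

variable {d : ℕ}

theorem sum_sum_ite_val_eq_succ {M : Type*} [AddCommMonoid M] (g : ℕ → ℕ → M) :
    ∑ a : Fin d, ∑ b : Fin d, (if (a : ℕ) = b + 1 then g a b else 0)
      = ∑ k ∈ Finset.range (d - 1), g (k + 1) k := by
  have hfilter :
      (Finset.range d).filter (fun k => k + 1 ∈ Finset.range d) = Finset.range (d - 1) := by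
    ext k; simp only [Finset.mem_filter, Finset.mem_range]; omega
  rw [Finset.sum_comm, ← hfilter, Finset.sum_filter,
    Fin.sum_univ_eq_sum_range (fun b => ∑ a : Fin d, if (a : ℕ) = b + 1 then g a b else 0)]
  refine Finset.sum_congr rfl fun k _ => ?_
  rw [Fin.sum_univ_eq_sum_range (fun a => if a = k + 1 then g a k else 0), Finset.sum_ite_eq']

theorem spinVarSum_sq (u : Fin d → ℝ) (hu : ∀ a, 0 ≤ u a) :
    spinVarSum d (fun a => u a ^ 2) = 2 * ∑ a, ∑ b, spinWeight d a b * (u a - u b) ^ 2 := by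
  set v : ℕ → ℝ := fun n => if h : n < d then u ⟨n, h⟩ else 0
  have hv : ∀ a : Fin d, v a = u a := fun a => by simp [v]
  have hweight : ∀ a b,
      spinWeight d a b = (spinLadder d a b ^ 2 + spinLadder d b a ^ 2) / 4 := fun a b => by
    rw [spinWeight]
    linear_combination (spinLadder_mul_swap a b) / 2
  have hswap : ∑ a, ∑ b, spinLadder d b a ^ 2 * (u a - u b) ^ 2
      = ∑ a, ∑ b, spinLadder d a b ^ 2 * (u a - u b) ^ 2 := by
    rw [Finset.sum_comm]
    simp only [sub_sq_comm]
  calc spinVarSum d (fun a => u a ^ 2)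
      = ∑ k ∈ Finset.range (d - 1),
          ((k : ℝ) + 1) * (d - ((k : ℝ) + 1)) * (v (k + 1) - v k) ^ 2 := by
        refine Finset.sum_congr rfl fun k hk => ?_
        have hk : k + 1 < d := by rw [Finset.mem_range] at hk; omega
        simp only [v, dif_pos hk, dif_pos (Nat.lt_of_succ_lt hk), Real.sqrt_sq (hu _),
          sub_sq_comm]
    _ = ∑ a, ∑ b, spinLadder d a b ^ 2 * (u a - u b) ^ 2 := by
        rw [← sum_sum_ite_val_eq_succ (d := d)
          fun n m => ((m : ℝ) + 1) * (d - ((m : ℝ) + 1)) * (v n - v m) ^ 2]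
        simp only [spinLadder_sq, ite_mul, zero_mul, hv]
    _ = 2 * ∑ a, ∑ b, spinWeight d a b * (u a - u b) ^ 2 := by
        have hsplit : ∑ a, ∑ b, spinWeight d a b * (u a - u b) ^ 2
            = (∑ a, ∑ b, spinLadder d a b ^ 2 * (u a - u b) ^ 2
              + ∑ a, ∑ b, spinLadder d b a ^ 2 * (u a - u b) ^ 2) / 4 := by
          simp only [hweight, ← Finset.sum_add_distrib, Finset.sum_div]
          refine Finset.sum_congr rfl fun a _ => Finset.sum_congr rfl fun b _ => ?_
          ring
        rw [hsplit, hswap]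
        ring

theorem spinVarSum_nonneg (lam : Fin d → ℝ) : 0 ≤ spinVarSum d lam := by
  refine Finset.sum_nonneg fun k hk => mul_nonneg (mul_nonneg (by positivity) ?_) (sq_nonneg _)
  have hk : k + 1 ≤ d := by rw [Finset.mem_range] at hk; omega
  rw [sub_nonneg]
  exact_mod_cast hk

end SpinVarSum

section States

variable {n : Type*} [Fintype n] [DecidableEq n]

theorem expval_diagonal (v : n → ℂ) (M : Matrix n n ℂ) :
    expval (Matrix.diagonal v) M = (∑ a, v a * M a a).re := by
  simp [expval, Matrix.trace, Matrix.diagonal_mul]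

theorem varState_diagonal_of_apply_self_eq_zero (v : n → ℂ) {A : Matrix n n ℂ}
    (hA : ∀ a, A a a = 0) :
    varState (Matrix.diagonal v) A = (∑ a, ∑ b, v a * (A a b * A b a)).re := by
  simp [varState, expval_diagonal, hA, Matrix.mul_apply, Finset.mul_sum]

theorem varState_diagonal_diagonal (v : n → ℂ) (x : n → ℝ) :
    varState (Matrix.diagonal v) (Matrix.diagonal fun a => (x a : ℂ))
      = ∑ a, (v a).re * x a ^ 2 - (∑ a, (v a).re * x a) ^ 2 := by
  simp [varState, expval_diagonal, Complex.re_sum, sq]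

theorem varState_diagonal_diagonal_nonneg {v : n → ℂ} (x : n → ℝ) (h0 : ∀ a, 0 ≤ (v a).re)
    (h1 : ∑ a, (v a).re = 1) :
    0 ≤ varState (Matrix.diagonal v) (Matrix.diagonal fun a => (x a : ℂ)) := by
  rw [varState_diagonal_diagonal, sub_nonneg]
  simpa using (even_two.convexOn_pow (𝕜 := ℝ)).map_sum_le (t := Finset.univ)
    (fun a _ => h0 a) h1 (fun a _ => Set.mem_univ (x a))

def schmidtCorr (c : Matrix n n ℂ) : Matrix (n × n) (n × n) ℂ :=
  Matrix.of fun p q => if p.1 = p.2 ∧ q.1 = q.2 then c p.1 q.1 else 0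

theorem expval_schmidtCorr_kron (c A B : Matrix n n ℂ) :
    expval (schmidtCorr c) (A ⊗ₖ B) = (∑ a, ∑ b, c a b * (A b a * B b a)).re := by
  simp [expval, schmidtCorr, Matrix.trace, Matrix.mul_apply, Fintype.sum_prod_type, ite_and,
    Matrix.kroneckerMap_apply]

theorem expval_schmidtCorr_kron_one (c A : Matrix n n ℂ) :
    expval (schmidtCorr c) (A ⊗ₖ 1) = (∑ a, c a a * A a a).re := by
  simp [expval_schmidtCorr_kron, Matrix.one_apply]

theorem expval_schmidtCorr_one_kron (c A : Matrix n n ℂ) :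
    expval (schmidtCorr c) (1 ⊗ₖ A) = (∑ a, c a a * A a a).re := by
  simp [expval_schmidtCorr_kron, Matrix.one_apply]

end States

section SpinStates

variable {d : ℕ}

theorem redA_schmidtCorr (c : Matrix (Fin d) (Fin d) ℂ) :
    redA d (schmidtCorr c) = Matrix.diagonal fun a => c a a := by
  ext a b
  simp only [redA, schmidtCorr, Matrix.of_apply, Matrix.diagonal_apply]
  split_ifs with h
  · simp [h]
  · exact Finset.sum_eq_zero fun k _ => if_neg fun hk => h (hk.1.trans hk.2.symm)

theorem redB_schmidtCorr (c : Matrix (Fin d) (Fin d) ℂ) :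
    redB d (schmidtCorr c) = Matrix.diagonal fun a => c a a := by
  ext a b
  simp only [redB, schmidtCorr, Matrix.of_apply, Matrix.diagonal_apply]
  split_ifs with h
  · simp [h]
  · exact Finset.sum_eq_zero fun k _ => if_neg fun hk => h (hk.1.symm.trans hk.2)

theorem varState_diagonal_spinX (v : Fin d → ℂ) :
    varState (Matrix.diagonal v) (spinX d) = ∑ a, ∑ b, spinWeight d a b * (v a).re := by
  simp [varState_diagonal_of_apply_self_eq_zero v spinX_apply_self, spinX_mul_spinX_swap,
    Complex.re_sum, mul_comm]

theorem varState_diagonal_spinY (v : Fin d → ℂ) :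
    varState (Matrix.diagonal v) (spinY d) = ∑ a, ∑ b, spinWeight d a b * (v a).re := by
  simp [varState_diagonal_of_apply_self_eq_zero v spinY_apply_self, spinY_mul_spinY_swap,
    Complex.re_sum, mul_comm]

theorem spinX_covariance_schmidtCorr (c : Matrix (Fin d) (Fin d) ℂ) :
    expval (schmidtCorr c) (spinX d ⊗ₖ spinX d)
        - expval (schmidtCorr c) (spinX d ⊗ₖ 1) * expval (schmidtCorr c) (1 ⊗ₖ spinX d)
      = ∑ a, ∑ b, spinWeight d a b * (c a b).re := by
  rw [expval_schmidtCorr_kron_one, expval_schmidtCorr_one_kron, expval_schmidtCorr_kron]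
  simp [spinX_apply_self, spinX_mul_self, spinWeight_comm, Complex.re_sum, mul_comm]

theorem spinY_covariance_schmidtCorr (c : Matrix (Fin d) (Fin d) ℂ) :
    expval (schmidtCorr c) (spinY d ⊗ₖ spinY d)
        - expval (schmidtCorr c) (spinY d ⊗ₖ 1) * expval (schmidtCorr c) (1 ⊗ₖ spinY d)
      = -∑ a, ∑ b, spinWeight d a b * (c a b).re := by
  rw [expval_schmidtCorr_kron_one, expval_schmidtCorr_one_kron, expval_schmidtCorr_kron]
  simp [spinY_apply_self, spinY_mul_self, spinWeight_comm, Complex.re_sum, mul_comm]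

theorem spinZ_covariance_schmidtCorr (c : Matrix (Fin d) (Fin d) ℂ) :
    expval (schmidtCorr c) (spinZ d ⊗ₖ spinZ d)
        - expval (schmidtCorr c) (spinZ d ⊗ₖ 1) * expval (schmidtCorr c) (1 ⊗ₖ spinZ d)
      = varState (Matrix.diagonal fun a => c a a) (spinZ d) := by
  rw [spinZ, varState_diagonal_diagonal, expval_schmidtCorr_kron_one, expval_schmidtCorr_one_kron,
    expval_schmidtCorr_kron]
  simp [Matrix.diagonal_apply, Complex.re_sum, sq]

end SpinStates

section Mixtures

variable {ι n : Type*} [Fintype ι]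

theorem re_sum_ofReal_mul_mul_conj_self (p : ι → ℝ) (x : ι → ℂ) :
    (∑ m, (p m : ℂ) * (x m * conj (x m))).re = ∑ m, p m * ‖x m‖ ^ 2 := by
  simp only [Complex.mul_conj', Complex.re_sum, ← Complex.ofReal_pow, Complex.re_ofReal_mul,
    Complex.ofReal_re]

theorem re_apply_self_nonneg {p : ι → ℝ} (hp : ∀ m, 0 ≤ p m) {z : ι → n → ℂ} {c : Matrix n n ℂ}
    (hc : ∀ a b, c a b = ∑ m, (p m : ℂ) * (z m a * conj (z m b))) (a : n) : 0 ≤ (c a a).re := by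
  rw [hc, re_sum_ofReal_mul_mul_conj_self]
  exact Finset.sum_nonneg fun m _ => mul_nonneg (hp m) (sq_nonneg _)

theorem sum_smul_pureState_apply (p : ι → ℝ) (ψ : ι → n → ℂ) (P Q : n) :
    (∑ m, (p m : ℂ) • pureState (ψ m)) P Q = ∑ m, (p m : ℂ) * (ψ m P * conj (ψ m Q)) := by
  simp [Matrix.sum_apply, pureState, Matrix.vecMulVec_apply]

theorem apply_eq_zero_of_sum_smul_pureState_apply_self_eq_zero {p : ι → ℝ} {ψ : ι → n → ℂ}
    (hp : ∀ m, 0 ≤ p m) {P : n} (h : (∑ m, (p m : ℂ) • pureState (ψ m)) P P = 0) {m : ι}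
    (hm : p m ≠ 0) : ψ m P = 0 := by
  have hsum : ∑ m, p m * ‖ψ m P‖ ^ 2 = 0 := by
    rw [← re_sum_ofReal_mul_mul_conj_self, ← sum_smul_pureState_apply, h, Complex.zero_re]
  have hterm := (Finset.sum_eq_zero_iff_of_nonneg fun m _ =>
    mul_nonneg (hp m) (sq_nonneg _)).mp hsum m (Finset.mem_univ m)
  simpa [hm] using hterm

end Mixtures

section DiagonalPureStates

variable {d r : ℕ}

theorem sum_norm_sq_diag_eq_one {ψ : Fin d × Fin d → ℂ} (hoff : ∀ a b, a ≠ b → ψ (a, b) = 0)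
    (hψ : IsUnitVec ψ) : ∑ a, ‖ψ (a, a)‖ ^ 2 = 1 := by
  rw [IsUnitVec, Fintype.sum_prod_type] at hψ
  rw [← hψ]
  refine Finset.sum_congr rfl fun a _ => ?_
  rw [Finset.sum_eq_single a (fun b _ hb => by simp [hoff a b (Ne.symm hb)]) (by simp),
    Complex.normSq_eq_norm_sq]

theorem card_diag_ne_zero_le {ψ : Fin d × Fin d → ℂ} (hoff : ∀ a b, a ≠ b → ψ (a, b) = 0)
    (hψ : SchmidtRankLE d r ψ) : (Finset.univ.filter fun a => ψ (a, a) ≠ 0).card ≤ r := by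
  have hdiag : (Matrix.of fun a b : Fin d => ψ (a, b)) = Matrix.diagonal fun a => ψ (a, a) := by
    ext a b
    by_cases h : a = b
    · simp [h]
    · simp [h, hoff a b h]
  rw [SchmidtRankLE, hdiag, Matrix.rank_diagonal, Fintype.card_subtype] at hψ
  exact hψ

theorem Bspin_le_spinVarSum {u : Fin d → ℂ} (h1 : ∑ a, ‖u a‖ ^ 2 = 1)
    (hr : (Finset.univ.filter fun a => u a ≠ 0).card ≤ r) :
    Bspin d r ≤ spinVarSum d fun a => ‖u a‖ ^ 2 := by
  refine csInf_le ⟨0, ?_⟩ ⟨fun a => ‖u a‖ ^ 2, fun a => by positivity, h1, ?_, rfl⟩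
  · rintro _ ⟨lam, -, -, -, rfl⟩
    exact spinVarSum_nonneg lam
  · simpa using hr

theorem exists_diagonal_decomposition_of_schmidtNumberLE {c : Matrix (Fin d) (Fin d) ℂ}
    (h : SchmidtNumberLE d r (schmidtCorr c)) :
    ∃ (N : ℕ) (p : Fin N → ℝ) (z : Fin N → Fin d → ℂ), (∀ m, 0 ≤ p m) ∧ ∑ m, p m = 1 ∧
      (∀ a b, c a b = ∑ m, (p m : ℂ) * (z m a * conj (z m b))) ∧
      ∀ m, p m ≠ 0 → ∑ a, ‖z m a‖ ^ 2 = 1 ∧ (Finset.univ.filter fun a => z m a ≠ 0).card ≤ r := by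
  obtain ⟨N, p, ψ, hp0, hp1, hunit, hrank, hρ⟩ := h
  have hoff : ∀ m, p m ≠ 0 → ∀ a b, a ≠ b → ψ m (a, b) = 0 := fun m hm a b hab =>
    apply_eq_zero_of_sum_smul_pureState_apply_self_eq_zero hp0
      (by rw [← hρ]; simp [schmidtCorr, hab]) hm
  refine ⟨N, p, fun m a => ψ m (a, a), hp0, hp1, fun a b => ?_, fun m hm =>
    ⟨sum_norm_sq_diag_eq_one (hoff m hm) (hunit m), card_diag_ne_zero_le (hoff m hm) (hrank m)⟩⟩
  rw [← sum_smul_pureState_apply, ← hρ]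
  simp [schmidtCorr]

end DiagonalPureStates

section Averaging

variable {ι n : Type*} [Fintype ι] [Fintype n]

theorem le_sum_mul_of_forall_ne_zero {p : ι → ℝ} (hp0 : ∀ m, 0 ≤ p m) (hp1 : ∑ m, p m = 1)
    {b : ℝ} {f : ι → ℝ} (h : ∀ m, p m ≠ 0 → b ≤ f m) : b ≤ ∑ m, p m * f m := by
  calc b = ∑ m, p m * b := by rw [← Finset.sum_mul, hp1, one_mul]
    _ ≤ ∑ m, p m * f m := Finset.sum_le_sum fun m _ => by
        rcases eq_or_ne (p m) 0 with hm | hm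
        · simp [hm]
        · exact mul_le_mul_of_nonneg_left (h m hm) (hp0 m)

theorem sum_mul_norm_sub_norm_sq_le {p : ι → ℝ} (hp : ∀ m, 0 ≤ p m) (x y : ι → ℂ) :
    ∑ m, p m * (‖x m‖ - ‖y m‖) ^ 2 ≤ ∑ m, p m * ‖x m‖ ^ 2 + ∑ m, p m * ‖y m‖ ^ 2
      - 2 * ‖∑ m, (p m : ℂ) * (x m * conj (y m))‖ := by
  have hcross : ‖∑ m, (p m : ℂ) * (x m * conj (y m))‖ ≤ ∑ m, p m * (‖x m‖ * ‖y m‖) :=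
    (norm_sum_le _ _).trans_eq (Finset.sum_congr rfl fun m _ => by
      simp [abs_of_nonneg (hp m)])
  have hexpand : ∑ m, p m * (‖x m‖ - ‖y m‖) ^ 2
      = ∑ m, p m * ‖x m‖ ^ 2 + ∑ m, p m * ‖y m‖ ^ 2 - 2 * ∑ m, p m * (‖x m‖ * ‖y m‖) := by
    rw [Finset.mul_sum, ← Finset.sum_add_distrib, ← Finset.sum_sub_distrib]
    exact Finset.sum_congr rfl fun m _ => by ring
  linarith

theorem sum_mul_sum_sum_mul_norm_sub_norm_sq_le {p : ι → ℝ} (hp : ∀ m, 0 ≤ p m)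
    (z : ι → n → ℂ) {c : Matrix n n ℂ} (hc : ∀ a b, c a b = ∑ m, (p m : ℂ) * (z m a * conj (z m b)))
    {w : n → n → ℝ} (hw0 : ∀ a b, 0 ≤ w a b) (hw : ∀ a b, w a b = w b a) :
    ∑ m, p m * ∑ a, ∑ b, w a b * (‖z m a‖ - ‖z m b‖) ^ 2
      ≤ 2 * (∑ a, ∑ b, w a b * (c a a).re - |∑ a, ∑ b, w a b * (c a b).re|) := by
  have hdiag : ∀ a, (c a a).re = ∑ m, p m * ‖z m a‖ ^ 2 := fun a => by
    rw [hc, re_sum_ofReal_mul_mul_conj_self]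
  have hpair : ∀ a b, ∑ m, p m * (‖z m a‖ - ‖z m b‖) ^ 2 ≤ (c a a).re + (c b b).re - 2 * ‖c a b‖ :=
    fun a b => by
      rw [hdiag, hdiag, hc]
      exact sum_mul_norm_sub_norm_sq_le hp _ _
  have hsymm : ∑ a, ∑ b, w a b * (c b b).re = ∑ a, ∑ b, w a b * (c a a).re := by
    rw [Finset.sum_comm]
    simp only [hw]
  have habs : |∑ a, ∑ b, w a b * (c a b).re| ≤ ∑ a, ∑ b, w a b * ‖c a b‖ := by
    refine (Finset.abs_sum_le_sum_abs _ _).trans (Finset.sum_le_sum fun a _ => ?_)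
    refine (Finset.abs_sum_le_sum_abs _ _).trans (Finset.sum_le_sum fun b _ => ?_)
    rw [abs_mul, abs_of_nonneg (hw0 a b)]
    exact mul_le_mul_of_nonneg_left (Complex.abs_re_le_norm _) (hw0 a b)
  calc ∑ m, p m * ∑ a, ∑ b, w a b * (‖z m a‖ - ‖z m b‖) ^ 2
      = ∑ a, ∑ b, w a b * ∑ m, p m * (‖z m a‖ - ‖z m b‖) ^ 2 := by
        simp only [Finset.mul_sum]
        rw [Finset.sum_comm]
        refine Finset.sum_congr rfl fun a _ => ?_
        rw [Finset.sum_comm]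
        exact Finset.sum_congr rfl fun b _ => Finset.sum_congr rfl fun m _ => by ring
    _ ≤ ∑ a, ∑ b, w a b * ((c a a).re + (c b b).re - 2 * ‖c a b‖) :=
        Finset.sum_le_sum fun a _ => Finset.sum_le_sum fun b _ =>
          mul_le_mul_of_nonneg_left (hpair a b) (hw0 a b)
    _ = 2 * (∑ a, ∑ b, w a b * (c a a).re - ∑ a, ∑ b, w a b * ‖c a b‖) := by
        simp only [mul_sub, mul_add, Finset.sum_sub_distrib, Finset.sum_add_distrib, hsymm]
        simp only [mul_left_comm _ (2 : ℝ), ← Finset.mul_sum]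
        ring
    _ ≤ 2 * (∑ a, ∑ b, w a b * (c a a).re - |∑ a, ∑ b, w a b * (c a b).re|) := by linarith

theorem sum_re_apply_self_eq_one {p : ι → ℝ} (hp1 : ∑ m, p m = 1) {z : ι → n → ℂ}
    {c : Matrix n n ℂ} (hc : ∀ a b, c a b = ∑ m, (p m : ℂ) * (z m a * conj (z m b)))
    (hz : ∀ m, p m ≠ 0 → ∑ a, ‖z m a‖ ^ 2 = 1) : ∑ a, (c a a).re = 1 := by
  simp only [hc, re_sum_ofReal_mul_mul_conj_self]
  rw [Finset.sum_comm, ← hp1]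
  refine Finset.sum_congr rfl fun m _ => ?_
  rw [← Finset.mul_sum]
  rcases eq_or_ne (p m) 0 with hm | hm
  · simp [hm]
  · rw [hz m hm, mul_one]

end Averaging

theorem schmidt_correlated_spin_covariance_bound_general
    (d r : ℕ) (c : Matrix (Fin d) (Fin d) ℂ)
    (ρ : Matrix (Fin d × Fin d) (Fin d × Fin d) ℂ)
    (hform : ρ = Matrix.of fun p q => if p.1 = p.2 ∧ q.1 = q.2 then c p.1 q.1 else 0)
    (hs : SchmidtNumberLE d r ρ) :
    Bspin d r ≤
      (varState (redA d ρ) (spinX d) + varState (redB d ρ) (spinX d) -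
        2 * |expval ρ (spinX d ⊗ₖ spinX d) -
          expval ρ (spinX d ⊗ₖ (1 : Matrix (Fin d) (Fin d) ℂ)) *
          expval ρ ((1 : Matrix (Fin d) (Fin d) ℂ) ⊗ₖ spinX d)|) +
      (varState (redA d ρ) (spinY d) + varState (redB d ρ) (spinY d) -
        2 * |expval ρ (spinY d ⊗ₖ spinY d) -
          expval ρ (spinY d ⊗ₖ (1 : Matrix (Fin d) (Fin d) ℂ)) *
          expval ρ ((1 : Matrix (Fin d) (Fin d) ℂ) ⊗ₖ spinY d)|) +
      (varState (redA d ρ) (spinZ d) + varState (redB d ρ) (spinZ d) -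
        2 * |expval ρ (spinZ d ⊗ₖ spinZ d) -
          expval ρ (spinZ d ⊗ₖ (1 : Matrix (Fin d) (Fin d) ℂ)) *
          expval ρ ((1 : Matrix (Fin d) (Fin d) ℂ) ⊗ₖ spinZ d)|) := by
  obtain rfl : ρ = schmidtCorr c := hform
  obtain ⟨N, p, z, hp0, hp1, hc, hz⟩ := exists_diagonal_decomposition_of_schmidtNumberLE hs
  have hB : Bspin d r ≤ ∑ m, p m * spinVarSum d fun a => ‖z m a‖ ^ 2 :=
    le_sum_mul_of_forall_ne_zero hp0 hp1 fun m hm => Bspin_le_spinVarSum (hz m hm).1 (hz m hm).2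
  simp only [spinVarSum_sq _ fun a => norm_nonneg (z _ a), mul_left_comm _ (2 : ℝ),
    ← Finset.mul_sum] at hB
  have hxy := sum_mul_sum_sum_mul_norm_sub_norm_sq_le hp0 z hc spinWeight_nonneg spinWeight_comm
  have hz0 : 0 ≤ varState (Matrix.diagonal fun a => c a a) (spinZ d) :=
    varState_diagonal_diagonal_nonneg _ (re_apply_self_nonneg hp0 hc)
      (sum_re_apply_self_eq_one hp1 hc fun m hm => (hz m hm).1)
  rw [redA_schmidtCorr, redB_schmidtCorr, spinX_covariance_schmidtCorr,
    spinY_covariance_schmidtCorr, spinZ_covariance_schmidtCorr, varState_diagonal_spinX,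
    varState_diagonal_spinY, abs_neg, abs_of_nonneg hz0]
  linarith

/-- For a Schmidt-correlated state ρ with Schmidt number ≤ r (computational
basis = j_z eigenbasis), the spin covariance combination is bounded below by B_{j,r}. -/
theorem schmidt_correlated_spin_covariance_bound
    (d r : ℕ) (hd : 2 ≤ d) (c : Matrix (Fin d) (Fin d) ℂ)
    (ρ : Matrix (Fin d × Fin d) (Fin d × Fin d) ℂ)
    (hform : ρ = Matrix.of fun p q => if p.1 = p.2 ∧ q.1 = q.2 then c p.1 q.1 else 0)
    (hρ : IsDensityMatrix ρ) (hs : SchmidtNumberLE d r ρ) :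
    Bspin d r ≤
      (varState (redA d ρ) (spinX d) + varState (redB d ρ) (spinX d) -
        2 * |expval ρ (spinX d ⊗ₖ spinX d) -
          expval ρ (spinX d ⊗ₖ (1 : Matrix (Fin d) (Fin d) ℂ)) *
          expval ρ ((1 : Matrix (Fin d) (Fin d) ℂ) ⊗ₖ spinX d)|) +
      (varState (redA d ρ) (spinY d) + varState (redB d ρ) (spinY d) -
        2 * |expval ρ (spinY d ⊗ₖ spinY d) -
          expval ρ (spinY d ⊗ₖ (1 : Matrix (Fin d) (Fin d) ℂ)) *
          expval ρ ((1 : Matrix (Fin d) (Fin d) ℂ) ⊗ₖ spinY d)|) +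
      (varState (redA d ρ) (spinZ d) + varState (redB d ρ) (spinZ d) -
        2 * |expval ρ (spinZ d ⊗ₖ spinZ d) -
          expval ρ (spinZ d ⊗ₖ (1 : Matrix (Fin d) (Fin d) ℂ)) *
          expval ρ ((1 : Matrix (Fin d) (Fin d) ℂ) ⊗ₖ spinZ d)|) :=
  schmidt_correlated_spin_covariance_bound_general d r c ρ hform hs
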